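/- Fix ε ∈ (0, 1/2], an integer m ≥ 1, d ∈ [0,1], α > 0, and δ₁, δ₂ ∈ (0,1). Let X_1, …, X_m be i.i.d. Bernoulli(d); conditionally on X, let b_1, …, b_m be independent with b_i ~ Bernoulli(1/2 + ε·X_i/4); let L be an independent real random variable with Laplace(0, 1/(εm)) distribution; and define d̃ = (4/ε)·((1/m)·Σ_{i=1}^m b_i − 1/2) + L. Then P(|d̃ − d| ≥ α) ≤ 2·exp(−2mα²(1−δ₁)²) + 2·exp(−(1/8)·mε²α²δ₁²(1−δ₂)²) + exp(−εmαδ₁δ₂). -/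

import Mathlib

/-!
Centre the two sums: `d̃ - d = (1/m) ∑ (X_i - d) + (4/(εm)) ∑ (b_i - 1/2 - εX_i/4) + L`.
Both sums have independent `1/4`-sub-Gaussian summands: for `X_i - d` this is Hoeffding's lemma,
for the second sum it is Hoeffding's lemma applied conditionally on `X_i`, given which `b_i` is
a Bernoulli bit. Splitting `α = α(1-δ₁) + αδ₁(1-δ₂) + αδ₁δ₂`, a union bound adds the two
Hoeffding tails to the exact Laplace tail `P(|L| ≥ c) = exp(-εmc)`.
-/

open MeasureTheory ProbabilityTheory

/-- The law of a `Laplace(0, b)` random variable: the measure on `ℝ` with density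
`x ↦ (1/(2b))·exp(−|x|/b)` with respect to Lebesgue measure. -/
noncomputable def laplaceMeasure (b : ℝ) : Measure ℝ :=
  volume.withDensity fun x => ENNReal.ofReal (1 / (2 * b) * Real.exp (-|x| / b))

open Real Set
open scoped NNReal

lemma laplaceMeasure_Ici {β : ℝ} (hβ : 0 < β) {c : ℝ} (hc : 0 ≤ c) :
    laplaceMeasure β (Ici c) = ENNReal.ofReal (exp (-c / β) / 2) := by
  have hrate : -1 / β < 0 := by simpa [neg_div] using hβ
  have hint : IntegrableOn (fun x => 1 / (2 * β) * exp (-1 / β * x)) (Ici c) :=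
    (integrableOn_Ici_iff_integrableOn_Ioi enorm_ne_top).2
      ((integrableOn_exp_mul_Ioi hrate c).const_mul _)
  have hexp : ∀ x, exp (-x / β) = exp (-1 / β * x) := fun x => by ring_nf
  rw [laplaceMeasure, withDensity_apply _ measurableSet_Ici,
    setLIntegral_congr_fun measurableSet_Ici fun x (hx : c ≤ x) => by
      rw [abs_of_nonneg (hc.trans hx), hexp],
    ← ofReal_integral_eq_lintegral_ofReal hint (ae_of_all _ fun x => by positivity),
    integral_Ici_eq_integral_Ioi, integral_const_mul, integral_exp_mul_Ioi hrate, hexp]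
  congr 1
  field_simp

lemma laplaceMeasure_Iic_neg {β c : ℝ} :
    laplaceMeasure β (Iic (-c)) = laplaceMeasure β (Ici c) := by
  rw [laplaceMeasure, withDensity_apply _ measurableSet_Iic, withDensity_apply _ measurableSet_Ici,
    ← lintegral_indicator measurableSet_Iic, ← lintegral_indicator measurableSet_Ici,
    ← lintegral_neg_eq_self]
  congr 1 with x
  simp [indicator_apply, abs_neg]

lemma laplaceMeasure_setOf_le_abs {β : ℝ} (hβ : 0 < β) {c : ℝ} (hc : 0 < c) :
    laplaceMeasure β {x | c ≤ |x|} = ENNReal.ofReal (exp (-c / β)) := by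
  have hsplit : {x : ℝ | c ≤ |x|} = Iic (-c) ∪ Ici c := by
    ext x; simp [le_abs', or_comm]
  rw [hsplit, measure_union (Iic_disjoint_Ici.2 (by linarith)) measurableSet_Ici,
    laplaceMeasure_Iic_neg, laplaceMeasure_Ici hβ hc.le,
    ← ENNReal.ofReal_add (by positivity) (by positivity)]
  ring_nf

section

variable {Ω : Type*} [MeasurableSpace Ω] {μ : Measure Ω}

lemma measureReal_le_abs_of_map_eq_laplaceMeasure {L : Ω → ℝ} (hL : Measurable L) {β : ℝ}
    (hlaw : μ.map L = laplaceMeasure β) (hβ : 0 < β) {c : ℝ} (hc : 0 < c) :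
    μ.real {ω | c ≤ |L ω|} = exp (-c / β) := by
  have hs : MeasurableSet {x : ℝ | c ≤ |x|} :=
    measurableSet_le measurable_const continuous_abs.measurable
  rw [show {ω | c ≤ |L ω|} = L ⁻¹' {x | c ≤ |x|} from rfl, ← map_measureReal_apply hL hs,
    hlaw, measureReal_def, laplaceMeasure_setOf_le_abs hβ hc, ENNReal.toReal_ofReal (by positivity)]

lemma measureReal_setOf_eq_zero_eq_one_sub [IsProbabilityMeasure μ] {X : Ω → ℝ}
    (hX : Measurable X) (h01 : ∀ ω, X ω = 0 ∨ X ω = 1) :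
    μ.real {ω | X ω = 0} = 1 - μ.real {ω | X ω = 1} := by
  have hs : MeasurableSet {ω | X ω = 1} := hX (measurableSet_singleton 1)
  rw [← probReal_compl_eq_one_sub hs]
  congr 1 with ω
  rcases h01 ω with h | h <;> simp [h]

lemma integral_eq_measureReal_of_forall_eq_zero_or_eq_one {Y : Ω → ℝ} (hY : Measurable Y)
    (h01 : ∀ ω, Y ω = 0 ∨ Y ω = 1) : μ[Y] = μ.real {ω | Y ω = 1} := by
  have hind : Y = {ω | Y ω = 1}.indicator fun _ => 1 := by
    funext ω
    rcases h01 ω with h | h <;> simp [h]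
  have hmeas : MeasurableSet {ω | Y ω = 1} := hY (measurableSet_singleton 1)
  conv_lhs => rw [hind]
  rw [integral_indicator_const _ hmeas, smul_eq_mul, mul_one]

lemma hasSubgaussianMGF_cond_sub_of_forall_eq_zero_or_eq_one [IsFiniteMeasure μ] {A : Set Ω}
    (hA : MeasurableSet A) {Y : Ω → ℝ} (hY : Measurable Y) (h01 : ∀ ω, Y ω = 0 ∨ Y ω = 1)
    {p : ℝ} (hp : μ.real (A ∩ {ω | Y ω = 1}) = p * μ.real A) :
    HasSubgaussianMGF (fun ω => Y ω - p) (1 / 4) μ[|A] := by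
  rcases eq_or_ne (μ A) 0 with h0 | h0
  · rw [cond_eq_zero_of_meas_eq_zero h0]
    exact ⟨by simp, fun t => by simp only [mgf, integral_zero_measure]; positivity⟩
  have := cond_isProbabilityMeasure (μ := μ) h0
  have hmean : μ[|A][Y] = p := by
    rw [integral_eq_measureReal_of_forall_eq_zero_or_eq_one hY h01, measureReal_def,
      cond_apply hA, ENNReal.toReal_mul, ENNReal.toReal_inv, ← measureReal_def,
      ← measureReal_def, hp]
    field_simp [(measureReal_ne_zero_iff).2 h0]
  have hIcc : ∀ ω, Y ω ∈ Icc (0 : ℝ) 1 := fun ω => by rcases h01 ω with h | h <;> simp [h]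
  have := hasSubgaussianMGF_of_mem_Icc (μ := μ[|A]) hY.aemeasurable (ae_of_all _ hIcc)
  rw [hmean] at this
  convert this using 1
  norm_num

lemma hasSubgaussianMGF_sub_of_forall_eq_zero_or_eq_one [IsProbabilityMeasure μ] {Y : Ω → ℝ}
    (hY : Measurable Y) (h01 : ∀ ω, Y ω = 0 ∨ Y ω = 1) {p : ℝ}
    (hp : μ.real {ω | Y ω = 1} = p) :
    HasSubgaussianMGF (fun ω => Y ω - p) (1 / 4) μ := by
  simpa using hasSubgaussianMGF_cond_sub_of_forall_eq_zero_or_eq_one (μ := μ)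
    MeasurableSet.univ hY h01 (p := p) (by simp [hp])

lemma setIntegral_eq_measureReal_mul_integral_cond [IsFiniteMeasure μ] {A : Set Ω}
    (f : Ω → ℝ) : ∫ ω in A, f ω ∂μ = μ.real A * ∫ ω, f ω ∂μ[|A] := by
  rcases eq_or_ne (μ A) 0 with h0 | h0
  · simp [Measure.restrict_eq_zero.2 h0, measureReal_def, h0]
  rw [ProbabilityTheory.cond, integral_smul_measure, smul_eq_mul, ← mul_assoc,
    ENNReal.toReal_inv, ← measureReal_def, mul_inv_cancel₀ ((measureReal_ne_zero_iff).2 h0),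
    one_mul]

namespace ProbabilityTheory.HasSubgaussianMGF

lemma measureReal_abs_ge_le [IsFiniteMeasure μ] {X : Ω → ℝ} {c : ℝ≥0}
    (h : HasSubgaussianMGF X c μ) {ε : ℝ} (hε : 0 ≤ ε) :
    μ.real {ω | ε ≤ |X ω|} ≤ 2 * exp (-ε ^ 2 / (2 * c)) := by
  calc μ.real {ω | ε ≤ |X ω|} ≤ μ.real ({ω | ε ≤ X ω} ∪ {ω | ε ≤ (-X) ω}) :=
        measureReal_mono fun ω hω => by simpa [le_abs] using hω
    _ ≤ μ.real {ω | ε ≤ X ω} + μ.real {ω | ε ≤ (-X) ω} := measureReal_union_le _ _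
    _ ≤ exp (-ε ^ 2 / (2 * c)) + exp (-ε ^ 2 / (2 * c)) :=
        add_le_add (h.measure_ge_le hε) (h.neg.measure_ge_le hε)
    _ = 2 * exp (-ε ^ 2 / (2 * c)) := by ring

lemma measureReal_abs_const_mul_sum_ge_le [IsFiniteMeasure μ] {ι : Type*}
    [Fintype ι] {X : ι → Ω → ℝ} (hindep : iIndepFun X μ) {c : ℝ≥0}
    (h : ∀ i, HasSubgaussianMGF (X i) c μ) (r : ℝ) {ε : ℝ} (hε : 0 ≤ ε) :
    μ.real {ω | ε ≤ |r * ∑ i, X i ω|} ≤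
      2 * exp (-ε ^ 2 / (2 * (r ^ 2 * (Fintype.card ι * c)))) := by
  have hsum := (HasSubgaussianMGF.sum_of_iIndepFun hindep (s := Finset.univ)
    fun i _ => h i).const_mul r
  convert hsum.measureReal_abs_ge_le hε using 5
  simp only [Finset.sum_const, Finset.card_univ, nsmul_eq_mul]
  rfl

lemma of_cond_of_cond_compl [IsProbabilityMeasure μ] {A : Set Ω}
    (hA : MeasurableSet A) {X : Ω → ℝ} {c : ℝ≥0}
    (hint : ∀ t, Integrable (fun ω => exp (t * X ω)) μ)
    (h₁ : HasSubgaussianMGF X c μ[|A]) (h₂ : HasSubgaussianMGF X c μ[|Aᶜ]) :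
    HasSubgaussianMGF X c μ where
  integrable_exp_mul := hint
  mgf_le t := calc
    mgf X μ t = μ.real A * mgf X μ[|A] t + μ.real Aᶜ * mgf X μ[|Aᶜ] t := by
      simp only [mgf, ← setIntegral_eq_measureReal_mul_integral_cond,
        integral_add_compl hA (hint t)]
    _ ≤ μ.real A * exp (c * t ^ 2 / 2) + μ.real Aᶜ * exp (c * t ^ 2 / 2) := by
      gcongr
      · exact h₁.mgf_le t
      · exact h₂.mgf_le t
    _ = exp (c * t ^ 2 / 2) := by
      rw [← add_mul, measureReal_add_measureReal_compl hA, probReal_univ, one_mul]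

end ProbabilityTheory.HasSubgaussianMGF

/-- Conditionally on `X`, the centred bit is `1/4`-sub-Gaussian by Hoeffding's lemma, and mixing
over `X` keeps the parameter `1/4`; Hoeffding's lemma applied directly to the range of this
variable, of length `1 + |q₁ - q₀|`, would give a worse one. -/
lemma hasSubgaussianMGF_of_condBernoulli [IsProbabilityMeasure μ] {X b : Ω → ℝ}
    (hX : Measurable X) (hb : Measurable b) (hX01 : ∀ ω, X ω = 0 ∨ X ω = 1)
    (hb01 : ∀ ω, b ω = 0 ∨ b ω = 1) {q₀ q₁ : ℝ}
    (h₁ : μ.real {ω | X ω = 1 ∧ b ω = 1} = q₁ * μ.real {ω | X ω = 1})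
    (h₀ : μ.real {ω | X ω = 0 ∧ b ω = 1} = q₀ * μ.real {ω | X ω = 0}) :
    HasSubgaussianMGF (fun ω => b ω - q₀ - (q₁ - q₀) * X ω) (1 / 4) μ := by
  have hA : MeasurableSet {ω | X ω = 1} := hX (measurableSet_singleton 1)
  have hAc : {ω | X ω = 1}ᶜ = {ω | X ω = 0} := by
    ext ω
    rcases hX01 ω with h | h <;> simp [h]
  set B := 1 + |q₀| + |q₁ - q₀|
  have hbound : ∀ ω, b ω - q₀ - (q₁ - q₀) * X ω ∈ Icc (-B) B := fun ω => by
    rcases hX01 ω with h | h <;> rcases hb01 ω with h' | h' <;> simp only [h, h', mem_Icc] <;>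
      constructor <;> linarith [le_abs_self q₀, neg_abs_le q₀, le_abs_self (q₁ - q₀),
        neg_abs_le (q₁ - q₀)]
  refine .of_cond_of_cond_compl hA
    (fun t => integrable_exp_mul_of_mem_Icc (by fun_prop) (ae_of_all _ hbound)) ?_ ?_
  · refine (hasSubgaussianMGF_cond_sub_of_forall_eq_zero_or_eq_one hA hb hb01 h₁).congr ?_
    filter_upwards [ae_cond_mem hA] with ω (hω : X ω = 1)
    rw [hω]
    ring
  · have hA₀ : MeasurableSet {ω | X ω = 0} := hX (measurableSet_singleton 0)
    rw [hAc]
    refine (hasSubgaussianMGF_cond_sub_of_forall_eq_zero_or_eq_one hA₀ hb hb01 h₀).congr ?_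
    filter_upwards [ae_cond_mem hA₀] with ω (hω : X ω = 0)
    rw [hω]
    ring

lemma hasSubgaussianMGF_randomizedResponse [IsProbabilityMeasure μ] {X b : Ω → ℝ}
    (hX : Measurable X) (hb : Measurable b) (hX01 : ∀ ω, X ω = 0 ∨ X ω = 1)
    (hb01 : ∀ ω, b ω = 0 ∨ b ω = 1) {d ε : ℝ} (hd : d ∈ Icc (0 : ℝ) 1) (hε : 0 ≤ ε)
    (hXdist : μ {ω | X ω = 1} = ENNReal.ofReal d)
    (hjoint1 : μ {ω | X ω = 1 ∧ b ω = 1} = ENNReal.ofReal (d * (1 / 2 + ε / 4)))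
    (hjoint0 : μ {ω | X ω = 0 ∧ b ω = 1} = ENNReal.ofReal ((1 - d) * (1 / 2))) :
    HasSubgaussianMGF (fun ω => X ω - d) (1 / 4) μ ∧
      HasSubgaussianMGF (fun ω => b ω - 1 / 2 - ε / 4 * X ω) (1 / 4) μ := by
  obtain ⟨hd0, hd1⟩ := hd
  have hX1 : μ.real {ω | X ω = 1} = d := by
    rw [measureReal_def, hXdist, ENNReal.toReal_ofReal hd0]
  refine ⟨hasSubgaussianMGF_sub_of_forall_eq_zero_or_eq_one hX hX01 hX1, ?_⟩
  refine (hasSubgaussianMGF_of_condBernoulli hX hb hX01 hb01 (q₀ := 1 / 2)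
    (q₁ := 1 / 2 + ε / 4) ?_ ?_).congr (ae_of_all _ fun ω => by ring)
  · rw [measureReal_def, hjoint1, ENNReal.toReal_ofReal (by positivity), hX1]
    ring
  · rw [measureReal_def, hjoint0, ENNReal.toReal_ofReal (by nlinarith),
      measureReal_setOf_eq_zero_eq_one_sub hX hX01, hX1]
    ring

lemma measureReal_le_abs_add_add_le [IsFiniteMeasure μ] (f g h : Ω → ℝ) (a b c : ℝ) :
    μ.real {ω | a + b + c ≤ |f ω + g ω + h ω|} ≤
      μ.real {ω | a ≤ |f ω|} + μ.real {ω | b ≤ |g ω|} + μ.real {ω | c ≤ |h ω|} := by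
  calc μ.real {ω | a + b + c ≤ |f ω + g ω + h ω|}
      ≤ μ.real ({ω | a ≤ |f ω|} ∪ {ω | b ≤ |g ω|} ∪ {ω | c ≤ |h ω|}) := by
        refine measureReal_mono fun ω hω => ?_
        by_contra hout
        simp only [mem_union, mem_ofPred_eq, not_or, not_le] at hω hout
        linarith [abs_add_three (f ω) (g ω) (h ω)]
    _ ≤ _ := (measureReal_union_le _ _).trans (add_le_add_left (measureReal_union_le _ _) _)

end

lemma estimator_sub_eq {m : ℕ} (hm : (m : ℝ) ≠ 0) {ε : ℝ} (hε : ε ≠ 0) (d l : ℝ)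
    (x y : Fin m → ℝ) :
    (4 / ε) * ((1 / (m : ℝ)) * ∑ i, y i - 1 / 2) + l - d =
      1 / m * ∑ i, (x i - d) + 4 / (ε * m) * ∑ i, (y i - 1 / 2 - ε / 4 * x i) + l := by
  simp only [Finset.sum_sub_distrib, ← Finset.mul_sum, Finset.sum_const, Finset.card_univ,
    Fintype.card_fin, nsmul_eq_mul]
  field_simp
  ring

theorem stmt_6_general {Ω : Type*} [MeasurableSpace Ω] (P : Measure Ω) [IsProbabilityMeasure P]
    (ε : ℝ) (hε0 : 0 < ε) (m : ℕ) (hm : 1 ≤ m) (d : ℝ)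
    (hd : d ∈ Set.Icc (0 : ℝ) 1) (α : ℝ) (hα : 0 < α)
    (δ₁ δ₂ : ℝ) (hδ₁ : δ₁ ∈ Set.Ioo (0 : ℝ) 1) (hδ₂ : δ₂ ∈ Set.Ioo (0 : ℝ) 1)
    (X b : Fin m → Ω → ℝ) (L : Ω → ℝ)
    (hXmeas : ∀ i, Measurable (X i)) (hbmeas : ∀ i, Measurable (b i))
    (hLmeas : Measurable L)
    (hX01 : ∀ i ω, X i ω = 0 ∨ X i ω = 1)
    (hb01 : ∀ i ω, b i ω = 0 ∨ b i ω = 1)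
    -- marginal law of `X i`: Bernoulli(d)
    (hXdist : ∀ i, P {ω | X i ω = 1} = ENNReal.ofReal d)
    -- conditionally on `X i`, `b i` is Bernoulli(1/2 + ε·X i/4)
    (hjoint1 : ∀ i, P {ω | X i ω = 1 ∧ b i ω = 1} = ENNReal.ofReal (d * (1 / 2 + ε / 4)))
    (hjoint0 : ∀ i, P {ω | X i ω = 0 ∧ b i ω = 1} = ENNReal.ofReal ((1 - d) * (1 / 2)))
    -- the pairs `(X i, b i)` are independent across `i`
    (hpairindep : iIndepFun
      (fun i ω => (X i ω, b i ω)) P)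
    (hLlaw : Measure.map L P = laplaceMeasure (1 / (ε * m))) :
    P {ω | α ≤ |((4 / ε) * ((1 / (m : ℝ)) * ∑ i, b i ω - 1 / 2) + L ω) - d|} ≤
      ENNReal.ofReal
        (2 * Real.exp (-2 * m * α ^ 2 * (1 - δ₁) ^ 2) +
         2 * Real.exp (-(1 / 8) * m * ε ^ 2 * α ^ 2 * δ₁ ^ 2 * (1 - δ₂) ^ 2) +
         Real.exp (-(ε * m * α * δ₁ * δ₂))) := by
  obtain ⟨hδ₁0, hδ₁1⟩ := hδ₁
  obtain ⟨hδ₂0, hδ₂1⟩ := hδ₂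
  have hm0 : (0 : ℝ) < m := by exact_mod_cast hm
  have hZ := fun i => hasSubgaussianMGF_randomizedResponse (hXmeas i) (hbmeas i) (hX01 i)
    (hb01 i) hd hε0.le (hXdist i) (hjoint1 i) (hjoint0 i)
  have hX : P.real {ω | α * (1 - δ₁) ≤ |1 / m * ∑ i, (X i ω - d)|} ≤
      2 * exp (-2 * m * α ^ 2 * (1 - δ₁) ^ 2) :=
    (HasSubgaussianMGF.measureReal_abs_const_mul_sum_ge_le
      (hpairindep.comp (fun _ p => p.1 - d) fun _ => by fun_prop) (fun i => (hZ i).1) _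
      (by positivity)).trans_eq
      (by rw [Fintype.card_fin]; congr 2; push_cast; field_simp; ring)
  have hY : P.real {ω | α * δ₁ * (1 - δ₂) ≤
      |4 / (ε * m) * ∑ i, (b i ω - 1 / 2 - ε / 4 * X i ω)|} ≤
      2 * exp (-(1 / 8) * m * ε ^ 2 * α ^ 2 * δ₁ ^ 2 * (1 - δ₂) ^ 2) :=
    (HasSubgaussianMGF.measureReal_abs_const_mul_sum_ge_le
      (hpairindep.comp (fun _ p => p.2 - 1 / 2 - ε / 4 * p.1) fun _ => by fun_prop)
      (fun i => (hZ i).2) _ (by positivity)).trans_eq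
      (by rw [Fintype.card_fin]; congr 2; push_cast; field_simp; ring)
  have hL : P.real {ω | α * δ₁ * δ₂ ≤ |L ω|} = exp (-(ε * m * α * δ₁ * δ₂)) :=
    (measureReal_le_abs_of_map_eq_laplaceMeasure hLmeas hLlaw (by positivity)
      (by positivity)).trans (by congr 1; field_simp)
  rw [← ENNReal.ofReal_toReal (measure_ne_top P _), ← measureReal_def]
  refine ENNReal.ofReal_le_ofReal ?_
  calc _ = P.real {ω | α * (1 - δ₁) + α * δ₁ * (1 - δ₂) + α * δ₁ * δ₂ ≤
        |1 / m * ∑ i, (X i ω - d) + 4 / (ε * m) * ∑ i, (b i ω - 1 / 2 - ε / 4 * X i ω)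
          + L ω|} := by
        congr 1 with ω
        rw [mem_ofPred_eq, mem_ofPred_eq, estimator_sub_eq hm0.ne' hε0.ne',
          show α * (1 - δ₁) + α * δ₁ * (1 - δ₂) + α * δ₁ * δ₂ = α by ring]
    _ ≤ _ := measureReal_le_abs_add_add_le _ _ _ _ _ _
    _ ≤ _ := add_le_add (add_le_add hX hY) hL.le

/-- Accuracy of the conventional pan-private density estimator: with `X_i` i.i.d.
`Bernoulli(d)`, `b_i` conditionally `Bernoulli(1/2 + εX_i/4)` given `X`, `L` an independent
`Laplace(0, 1/(εm))` random variable and `d̃ = (4/ε)((1/m)∑ b_i − 1/2) + L`,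
`P(|d̃ − d| ≥ α) ≤ 2e^{−2mα²(1−δ₁)²} + 2e^{−(1/8)mε²α²δ₁²(1−δ₂)²} + e^{−εmαδ₁δ₂}`. -/
theorem stmt_6 {Ω : Type*} [MeasurableSpace Ω] (P : Measure Ω) [IsProbabilityMeasure P]
    (ε : ℝ) (hε0 : 0 < ε) (hε1 : ε ≤ 1 / 2) (m : ℕ) (hm : 1 ≤ m) (d : ℝ)
    (hd : d ∈ Set.Icc (0 : ℝ) 1) (α : ℝ) (hα : 0 < α)
    (δ₁ δ₂ : ℝ) (hδ₁ : δ₁ ∈ Set.Ioo (0 : ℝ) 1) (hδ₂ : δ₂ ∈ Set.Ioo (0 : ℝ) 1)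
    (X b : Fin m → Ω → ℝ) (L : Ω → ℝ)
    (hXmeas : ∀ i, Measurable (X i)) (hbmeas : ∀ i, Measurable (b i))
    (hLmeas : Measurable L)
    (hX01 : ∀ i ω, X i ω = 0 ∨ X i ω = 1)
    (hb01 : ∀ i ω, b i ω = 0 ∨ b i ω = 1)
    -- marginal law of `X i`: Bernoulli(d)
    (hXdist : ∀ i, P {ω | X i ω = 1} = ENNReal.ofReal d)
    -- conditionally on `X i`, `b i` is Bernoulli(1/2 + ε·X i/4)
    (hjoint1 : ∀ i, P {ω | X i ω = 1 ∧ b i ω = 1} = ENNReal.ofReal (d * (1 / 2 + ε / 4)))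
    (hjoint0 : ∀ i, P {ω | X i ω = 0 ∧ b i ω = 1} = ENNReal.ofReal ((1 - d) * (1 / 2)))
    -- the pairs `(X i, b i)` are independent across `i`
    (hpairindep : iIndepFun
      (fun i ω => (X i ω, b i ω)) P)
    -- `L` is independent of all the pairs
    (hLindep : IndepFun L (fun ω => fun i => (X i ω, b i ω)) P)
    (hLlaw : Measure.map L P = laplaceMeasure (1 / (ε * m))) :
    P {ω | α ≤ |((4 / ε) * ((1 / (m : ℝ)) * ∑ i, b i ω - 1 / 2) + L ω) - d|} ≤
      ENNReal.ofReal
        (2 * Real.exp (-2 * m * α ^ 2 * (1 - δ₁) ^ 2) +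
         2 * Real.exp (-(1 / 8) * m * ε ^ 2 * α ^ 2 * δ₁ ^ 2 * (1 - δ₂) ^ 2) +
         Real.exp (-(ε * m * α * δ₁ * δ₂))) :=
  stmt_6_general P ε hε0 m hm d hd α hα δ₁ δ₂ hδ₁ hδ₂ X b L hXmeas hbmeas hLmeas hX01 hb01 hXdist
    hjoint1 hjoint0 hpairindep hLlaw
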